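/- For every fixed t ∈ [0,T], the map y ↦ V(t,y) is Lipschitz continuous on (0,∞) with Lipschitz constant M·(T − t)·e^{μ(T−t)}: for all y, y' > 0, |V(t,y) − V(t,y')| ≤ M·(T − t)·e^{μ(T−t)}·|y − y'|. -/

import Mathlib

open MeasureTheory ProbabilityTheory

/-- A standard Brownian motion with respect to the filtration `ℱ` under the probability
measure `Pr`: it starts at `0` a.s., has a.s. continuous paths, is adapted, and for
`0 ≤ u ≤ s` the increment `B s - B u` is independent of `ℱ u` and Gaussian with mean `0`
and variance `s - u`. -/
structure IsStandardBM {Ω : Type*} {mΩ : MeasurableSpace Ω}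
    (Pr : Measure Ω) (ℱ : Filtration ℝ mΩ) (B : ℝ → Ω → ℝ) : Prop where
  zero : ∀ᵐ ω ∂Pr, B 0 ω = 0
  cont : ∀ᵐ ω ∂Pr, Continuous fun s => B s ω
  adapted : Adapted ℱ B
  indep : ∀ u s : ℝ, 0 ≤ u → u ≤ s →
    Indep (MeasurableSpace.comap (fun ω => B s ω - B u ω) Real.measurableSpace) (ℱ u) Pr
  gauss : ∀ u s : ℝ, 0 ≤ u → u ≤ s →
    Pr.map (fun ω => B s ω - B u ω) = gaussianReal 0 (Real.toNNReal (s - u))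

/-- `G t y`: the expected reward from stopping immediately at time `t` when the price is `y`. -/
noncomputable def G (M P μ T t y : ℝ) : ℝ :=
  M * P * t + M * y * Real.exp (μ * (T - t)) * (T - t)

/-- `V t y`: the value function, the supremum of expected rewards `E[R^{t,y}(τ)]` over all
stopping times `τ` of the filtration `ℱ` with `t ≤ τ ≤ T` almost surely, where
`R^{t,y}(τ) = M·P·τ + M·Y_T^{t,y}·(T − τ)` and
`Y_T^{t,y} = y·exp((μ − σ²/2)(T − t) + σ(B_T − B_t))`. -/
noncomputable def V {Ω : Type*} {mΩ : MeasurableSpace Ω}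
    (Pr : Measure Ω) (ℱ : Filtration ℝ mΩ) (B : ℝ → Ω → ℝ)
    (M P σ μ T t y : ℝ) : ℝ :=
  sSup {x : ℝ | ∃ τ : Ω → ℝ, IsStoppingTime ℱ (fun ω => (τ ω : WithTop ℝ)) ∧
    (∀ᵐ ω ∂Pr, t ≤ τ ω ∧ τ ω ≤ T) ∧
    x = ∫ ω, (M * P * τ ω +
      M * (y * Real.exp ((μ - σ ^ 2 / 2) * (T - t) + σ * (B T ω - B t ω))) * (T - τ ω)) ∂Pr}

/-!
For a fixed admissible stopping time `τ`, the expected reward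
`E[R^{t,y}(τ)] = M P E[τ] + y · M E[Z (T - τ)]`, with `Z = Y_T^{t,y} / y`, is affine in `y`.
Since `0 ≤ T - τ ≤ T - t` and `E[Z] = e^{μ(T-t)}` (the Gaussian moment generating function),
its slope lies in `[0, M (T - t) e^{μ(T-t)}]`. The value function is the supremum of these
uniformly Lipschitz functions, hence Lipschitz with the same constant.
-/

open Real

section SupOfLipschitz

variable {ι : Type*} {s : Set ι} {g : ι → ℝ → ℝ} {L y y' : ℝ}

lemma csSup_image_le_csSup_image_add (hs : s.Nonempty) (hbdd' : BddAbove ((g · y') '' s))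
    (hg : ∀ i ∈ s, g i y ≤ g i y' + L * |y - y'|) :
    sSup ((g · y) '' s) ≤ sSup ((g · y') '' s) + L * |y - y'| := by
  refine csSup_le (hs.image _) ?_
  rintro _ ⟨i, hi, rfl⟩
  exact (hg i hi).trans (add_le_add_left (le_csSup hbdd' ⟨i, hi, rfl⟩) _)

lemma abs_csSup_image_sub_csSup_image_le (hs : s.Nonempty) (hbdd : BddAbove ((g · y) '' s))
    (hbdd' : BddAbove ((g · y') '' s)) (hg : ∀ i ∈ s, |g i y - g i y'| ≤ L * |y - y'|) :
    |sSup ((g · y) '' s) - sSup ((g · y') '' s)| ≤ L * |y - y'| := by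
  have h := csSup_image_le_csSup_image_add hs hbdd' fun i hi =>
    sub_le_iff_le_add'.1 (abs_sub_le_iff.1 (hg i hi)).1
  have h' := csSup_image_le_csSup_image_add hs hbdd fun i hi =>
    sub_le_iff_le_add'.1 ((abs_sub_comm y y').symm ▸ (abs_sub_le_iff.1 (hg i hi)).2)
  rw [abs_sub_comm y' y] at h'
  exact abs_sub_le_iff.2 ⟨by linarith, by linarith⟩

end SupOfLipschitz

section Reward

variable {Ω : Type*} {mΩ : MeasurableSpace Ω} {Pr : Measure Ω} {Z τ : Ω → ℝ} {t T : ℝ}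

lemma integrable_of_ae_mem_Icc [IsFiniteMeasure Pr] (hτ : AEStronglyMeasurable τ Pr)
    (h : ∀ᵐ ω ∂Pr, t ≤ τ ω ∧ τ ω ≤ T) : Integrable τ Pr :=
  .of_bound hτ (max |t| |T|) (h.mono fun _ hω => abs_le_max_abs_abs hω.1 hω.2)

lemma integrable_mul_sub (hZ : Integrable Z Pr) (hτ : AEStronglyMeasurable τ Pr)
    (h : ∀ᵐ ω ∂Pr, t ≤ τ ω ∧ τ ω ≤ T) : Integrable (fun ω => Z ω * (T - τ ω)) Pr :=
  hZ.mul_bdd (c := T - t) (aestronglyMeasurable_const.sub hτ) <| h.mono fun _ hω => by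
    rw [Real.norm_eq_abs, abs_le]; constructor <;> linarith [hω.1, hω.2]

lemma integral_mul_sub_nonneg (hZ0 : ∀ ω, 0 ≤ Z ω) (h : ∀ᵐ ω ∂Pr, τ ω ≤ T) :
    0 ≤ ∫ ω, Z ω * (T - τ ω) ∂Pr :=
  integral_nonneg_of_ae (h.mono fun ω hω => mul_nonneg (hZ0 ω) (sub_nonneg.2 hω))

lemma integral_mul_sub_le (hZ0 : ∀ ω, 0 ≤ Z ω) (hZ : Integrable Z Pr)
    (hτ : AEStronglyMeasurable τ Pr) (h : ∀ᵐ ω ∂Pr, t ≤ τ ω ∧ τ ω ≤ T) :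
    ∫ ω, Z ω * (T - τ ω) ∂Pr ≤ (T - t) * ∫ ω, Z ω ∂Pr := by
  rw [← integral_const_mul]
  refine integral_mono_ae (integrable_mul_sub hZ hτ h) (hZ.const_mul _) (h.mono fun ω hω => ?_)
  show Z ω * (T - τ ω) ≤ (T - t) * Z ω
  rw [mul_comm]
  exact mul_le_mul_of_nonneg_right (by linarith [hω.1]) (hZ0 ω)

lemma integral_reward_eq [IsFiniteMeasure Pr] (hZ : Integrable Z Pr)
    (hτ : AEStronglyMeasurable τ Pr) (h : ∀ᵐ ω ∂Pr, t ≤ τ ω ∧ τ ω ≤ T) (M P y : ℝ) :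
    ∫ ω, (M * P * τ ω + M * (y * Z ω) * (T - τ ω)) ∂Pr
      = M * P * ∫ ω, τ ω ∂Pr + y * (M * ∫ ω, Z ω * (T - τ ω) ∂Pr) := by
  calc _ = ∫ ω, (M * P * τ ω + y * M * (Z ω * (T - τ ω))) ∂Pr := by
        congr with ω; ring
    _ = _ := by
        rw [integral_add ((integrable_of_ae_mem_Icc hτ h).const_mul _)
          ((integrable_mul_sub hZ hτ h).const_mul _), integral_const_mul, integral_const_mul]
        ring

lemma abs_integral_reward_sub_le [IsFiniteMeasure Pr] {M : ℝ} (hM : 0 ≤ M)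
    (hZ0 : ∀ ω, 0 ≤ Z ω) (hZ : Integrable Z Pr) (hτ : AEStronglyMeasurable τ Pr)
    (h : ∀ᵐ ω ∂Pr, t ≤ τ ω ∧ τ ω ≤ T) (P y y' : ℝ) :
    |∫ ω, (M * P * τ ω + M * (y * Z ω) * (T - τ ω)) ∂Pr
        - ∫ ω, (M * P * τ ω + M * (y' * Z ω) * (T - τ ω)) ∂Pr|
      ≤ M * (T - t) * (∫ ω, Z ω ∂Pr) * |y - y'| := by
  have hI₀ := integral_mul_sub_nonneg hZ0 (h.mono fun _ hω => hω.2)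
  have hI := integral_mul_sub_le hZ0 hZ hτ h
  rw [integral_reward_eq hZ hτ h, integral_reward_eq hZ hτ h, add_sub_add_left_eq_sub, ← sub_mul,
    abs_mul, abs_of_nonneg (mul_nonneg hM hI₀), mul_comm, mul_assoc M (T - t)]
  gcongr

lemma integral_reward_le [IsProbabilityMeasure Pr] {M P : ℝ} (hM : 0 ≤ M) (hP : 0 ≤ P)
    (hZ0 : ∀ ω, 0 ≤ Z ω) (hZ : Integrable Z Pr) (hτ : AEStronglyMeasurable τ Pr)
    (h : ∀ᵐ ω ∂Pr, t ≤ τ ω ∧ τ ω ≤ T) (y : ℝ) :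
    ∫ ω, (M * P * τ ω + M * (y * Z ω) * (T - τ ω)) ∂Pr
      ≤ M * P * T + M * (T - t) * (∫ ω, Z ω ∂Pr) * |y| := by
  have hI₀ := integral_mul_sub_nonneg hZ0 (h.mono fun _ hω => hω.2)
  have hI := integral_mul_sub_le hZ0 hZ hτ h
  have hτT : ∫ ω, τ ω ∂Pr ≤ T := by
    simpa using integral_mono_ae (integrable_of_ae_mem_Icc hτ h) (integrable_const T)
      (h.mono fun _ hω => hω.2)
  rw [integral_reward_eq hZ hτ h]
  refine add_le_add (mul_le_mul_of_nonneg_left hτT (mul_nonneg hM hP)) ?_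
  calc y * (M * ∫ ω, Z ω * (T - τ ω) ∂Pr) ≤ |y| * (M * ∫ ω, Z ω * (T - τ ω) ∂Pr) := by
        gcongr; exact le_abs_self y
    _ ≤ M * (T - t) * (∫ ω, Z ω ∂Pr) * |y| := by
        rw [mul_comm, mul_assoc M (T - t)]; gcongr

end Reward

section Gaussian

variable {Ω : Type*} {mΩ : MeasurableSpace Ω} {Pr : Measure Ω} {X : Ω → ℝ} {v : NNReal}

lemma integrable_exp_add_mul_of_map_eq_gaussianReal [IsProbabilityMeasure Pr]
    (hX : Pr.map X = gaussianReal 0 v) (a c : ℝ) : Integrable (fun ω => exp (a + c * X ω)) Pr := by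
  simp_rw [exp_add]
  exact (mgf_pos_iff.1 (by rw [mgf_gaussianReal hX]; exact exp_pos _)).const_mul _

lemma integral_exp_add_mul_of_map_eq_gaussianReal (hX : Pr.map X = gaussianReal 0 v)
    (a c : ℝ) : ∫ ω, exp (a + c * X ω) ∂Pr = exp (a + v * c ^ 2 / 2) := by
  simp_rw [exp_add]
  rw [integral_const_mul]
  have := mgf_gaussianReal hX c
  simp only [mgf, zero_mul, zero_add] at this
  rw [this]

end Gaussian

section BlackScholes

variable {Ω : Type*} {mΩ : MeasurableSpace Ω} {Pr : Measure Ω} {ℱ : Filtration ℝ mΩ}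
  {B : ℝ → Ω → ℝ} {σ μ t T : ℝ}

/-- `Y_T^{t,y} = y * growthFactor B σ μ T t`. -/
noncomputable def growthFactor (B : ℝ → Ω → ℝ) (σ μ T t : ℝ) (ω : Ω) : ℝ :=
  exp ((μ - σ ^ 2 / 2) * (T - t) + σ * (B T ω - B t ω))

lemma IsStandardBM.integrable_growthFactor [IsProbabilityMeasure Pr] (hB : IsStandardBM Pr ℱ B)
    (ht : 0 ≤ t) (htT : t ≤ T) : Integrable (growthFactor B σ μ T t) Pr :=
  integrable_exp_add_mul_of_map_eq_gaussianReal (hB.gauss t T ht htT) _ _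

lemma IsStandardBM.integral_growthFactor [IsProbabilityMeasure Pr] (hB : IsStandardBM Pr ℱ B)
    (ht : 0 ≤ t) (htT : t ≤ T) : ∫ ω, growthFactor B σ μ T t ω ∂Pr = exp (μ * (T - t)) := by
  unfold growthFactor
  rw [integral_exp_add_mul_of_map_eq_gaussianReal (hB.gauss t T ht htT),
    Real.coe_toNNReal _ (sub_nonneg.2 htT)]
  ring_nf

lemma measurable_of_isStoppingTime_coe {τ : Ω → ℝ}
    (hτ : IsStoppingTime ℱ fun ω => (τ ω : WithTop ℝ)) : Measurable τ :=
  measurable_of_Iic fun i => by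
    simpa only [WithTop.coe_le_coe, Set.preimage, Set.mem_Iic] using ℱ.le i _ (hτ i)

variable (Pr ℱ) in
def admissibleStoppingTimes (t T : ℝ) : Set (Ω → ℝ) :=
  {τ | IsStoppingTime ℱ (fun ω => (τ ω : WithTop ℝ)) ∧ ∀ᵐ ω ∂Pr, t ≤ τ ω ∧ τ ω ≤ T}

variable (Pr B) in
noncomputable def expectedReward (M P σ μ T t : ℝ) (τ : Ω → ℝ) (y : ℝ) : ℝ :=
  ∫ ω, (M * P * τ ω + M * (y * growthFactor B σ μ T t ω) * (T - τ ω)) ∂Pr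

lemma V_eq_sSup_image (M P y : ℝ) :
    V Pr ℱ B M P σ μ T t y =
      sSup ((expectedReward Pr B M P σ μ T t · y) '' admissibleStoppingTimes Pr ℱ t T) := by
  rw [V]
  congr 1
  ext x
  simp only [Set.mem_ofPred_eq, Set.mem_image, admissibleStoppingTimes, expectedReward,
    growthFactor, and_assoc, eq_comm]

end BlackScholes

theorem stmt_11_general {Ω : Type*} {mΩ : MeasurableSpace Ω}
    (Pr : Measure Ω) [IsProbabilityMeasure Pr] (ℱ : Filtration ℝ mΩ) (B : ℝ → Ω → ℝ)
    (hB : IsStandardBM Pr ℱ B)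
    (T M P σ μ : ℝ) (hM : 0 < M) (hP : 0 < P)
    (t : ℝ) (ht : t ∈ Set.Icc 0 T) (y y' : ℝ) :
    |V Pr ℱ B M P σ μ T t y - V Pr ℱ B M P σ μ T t y'|
      ≤ M * (T - t) * Real.exp (μ * (T - t)) * |y - y'| := by
  obtain ⟨ht0, htT⟩ := ht
  have hZ0 : ∀ ω, 0 ≤ growthFactor B σ μ T t ω := fun ω => (exp_pos _).le
  have hZ := hB.integrable_growthFactor (σ := σ) (μ := μ) ht0 htT
  have hτ : ∀ τ ∈ admissibleStoppingTimes Pr ℱ t T, AEStronglyMeasurable τ Pr :=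
    fun τ hτ => (measurable_of_isStoppingTime_coe hτ.1).aestronglyMeasurable
  have hbdd : ∀ z : ℝ, BddAbove
      ((expectedReward Pr B M P σ μ T t · z) '' admissibleStoppingTimes Pr ℱ t T) := fun z =>
    ⟨_, Set.forall_mem_image.2 fun τ hτA =>
      integral_reward_le hM.le hP.le hZ0 hZ (hτ τ hτA) hτA.2 z⟩
  have hne : (admissibleStoppingTimes Pr ℱ t T).Nonempty :=
    ⟨fun _ => t, isStoppingTime_const ℱ t, .of_forall fun _ => ⟨le_rfl, htT⟩⟩
  rw [V_eq_sSup_image, V_eq_sSup_image, ← hB.integral_growthFactor ht0 htT]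
  exact abs_csSup_image_sub_csSup_image_le hne (hbdd y) (hbdd y') fun τ hτA =>
    abs_integral_reward_sub_le hM.le hZ0 hZ (hτ τ hτA) hτA.2 P y y'

theorem stmt_11 {Ω : Type*} {mΩ : MeasurableSpace Ω}
    (Pr : Measure Ω) [IsProbabilityMeasure Pr] (ℱ : Filtration ℝ mΩ) (B : ℝ → Ω → ℝ)
    (hB : IsStandardBM Pr ℱ B)
    (T M P σ μ : ℝ) (hT : 0 < T) (hM : 0 < M) (hP : 0 < P) (hσ : 0 < σ)
    (t : ℝ) (ht : t ∈ Set.Icc 0 T) (y y' : ℝ) (hy : 0 < y) (hy' : 0 < y') :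
    |V Pr ℱ B M P σ μ T t y - V Pr ℱ B M P σ μ T t y'|
      ≤ M * (T - t) * Real.exp (μ * (T - t)) * |y - y'| :=
  stmt_11_general Pr ℱ B hB T M P σ μ hM hP t ht y y'
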